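/- arXiv:2205.05362 — 5 statements merged into one kernel-verified Lean document; each statement's English description precedes it below -/
import Mathlib

section
/- Let n ≥ 2, 1 ≤ p ≤ n−1 and z ∈ ℤ. Consider the integer list L = [z+n, z+n−1, …, z+n−p+1] ++ [n−p, n−p−1, …, 1] (the first block has p entries decreasing by 1, the second block has n−p entries decreasing by 1). Then the maximum length of a strictly decreasing subsequence of L equals n − min(p, n−p, max(−z, 0)). -/
/-- The set of lengths of strictly decreasing subsequences (sublists) of `L`. -/
def ldsSet (L : List ℤ) : Set ℕ :=
  {m | ∃ s : List ℤ, s.Sublist L ∧ s.Chain' (· > ·) ∧ s.length = m}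

private lemma chain'_map_range (N : ℕ) (f : ℕ → ℤ) (h : ∀ i, f (i + 1) < f i) :
    ((List.range N).map f).Chain' (· > ·) := by
  unfold List.Chain'; rw [List.isChain_map]
  cases N with
  | zero => simp
  | succ n => exact (List.isChain_range_succ _ n).mpr fun m _ => h m

private lemma drop_map_range (N k : ℕ) (f : ℕ → ℤ) :
    ((List.range N).map f).drop k = (List.range (N - k)).map (fun i => f (k + i)) := by
  apply List.ext_getElem
  · simp
  · intro i h₁ h₂
    simp only [List.getElem_drop, List.getElem_map, List.getElem_range]

private lemma decr_le (lo : ℤ) : ∀ (s : List ℤ) (hi : ℤ), s.Pairwise (· > ·) →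
    (∀ x ∈ s, lo ≤ x ∧ x ≤ hi) → (s.length : ℤ) ≤ max (hi - lo + 1) 0
  | [], hi, _, _ => by simp
  | x :: t, hi, hp, hb => by
    have hx := hb x List.mem_cons_self
    have hp' := List.pairwise_cons.mp hp
    have ht : ∀ y ∈ t, lo ≤ y ∧ y ≤ x - 1 := by
      intro y hy
      have h1 := hp'.1 y hy
      have h2 := hb y (List.mem_cons_of_mem _ hy)
      omega
    have := decr_le lo t (x - 1) hp'.2 ht
    simp only [List.length_cons] at *
    push_cast at *
    omega

/-- For `n ≥ 2`, `1 ≤ p ≤ n−1` and `z ∈ ℤ`, the list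
`L = [z+n, z+n−1, …, z+n−p+1] ++ [n−p, n−p−1, …, 1]` has maximum length of a
strictly decreasing subsequence equal to `n − min(p, n−p, max(−z, 0))`. -/
theorem statement3 (n p : ℕ) (z : ℤ) (hn : 2 ≤ n) (hp1 : 1 ≤ p) (hp2 : p ≤ n - 1) :
    IsGreatest (ldsSet
      ((List.range p).map (fun i => z + (n : ℤ) - (i : ℤ)) ++
       (List.range (n - p)).map (fun i => (n : ℤ) - (p : ℤ) - (i : ℤ))))
      (n - min (min p (n - p)) (Int.toNat (-z))) := by
  have hco : ∀ N : ℕ, ((do let a ← List.range N; pure ((a : ℤ))) : List ℤ)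
      = (List.range N).map (fun a : ℕ => (a : ℤ)) := fun N => List.map_eq_flatMap.symm
  have hAeq : (List.range p).map (fun i => z + (n : ℤ) - (i : ℤ))
      = (List.range p).map (fun i : ℕ => z + (n : ℤ) - ((i : ℕ) : ℤ)) := by
    rw [hco, List.map_map]; rfl
  have hBeq : (List.range (n - p)).map (fun i => (n : ℤ) - (p : ℤ) - (i : ℤ))
      = (List.range (n - p)).map (fun i : ℕ => (n : ℤ) - (p : ℤ) - ((i : ℕ) : ℤ)) := by
    rw [hco, List.map_map]; rfl
  rw [hAeq, hBeq]
  set k := Int.toNat (-z) with hk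
  set A := (List.range p).map (fun i : ℕ => z + (n : ℤ) - ((i : ℕ) : ℤ)) with hA
  set B := (List.range (n - p)).map (fun i : ℕ => (n : ℤ) - (p : ℤ) - ((i : ℕ) : ℤ)) with hB
  have hAlen : A.length = p := by rw [hA, List.length_map, List.length_range]
  have hBlen : B.length = n - p := by rw [hB, List.length_map, List.length_range]
  have hAchain : A.Chain' (· > ·) :=
    chain'_map_range p _ (by intro i; push_cast; omega)
  have hBchain : B.Chain' (· > ·) :=
    chain'_map_range (n - p) _ (by intro i; push_cast; omega)
  have hAmem : ∀ x ∈ A, z + n - p + 1 ≤ x ∧ x ≤ z + n := by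
    intro x hx
    rw [hA, List.mem_map] at hx
    obtain ⟨i, hi, rfl⟩ := hx
    rw [List.mem_range] at hi
    omega
  have hBmem : ∀ x ∈ B, 1 ≤ x ∧ x ≤ (n : ℤ) - p := by
    intro x hx
    rw [hB, List.mem_map] at hx
    obtain ⟨i, hi, rfl⟩ := hx
    rw [List.mem_range] at hi
    omega
  constructor
  · -- membership: construct a witness
    by_cases h1 : p ≤ n - p ∧ p ≤ k
    · refine ⟨B, List.sublist_append_right _ _, hBchain, ?_⟩
      rw [hBlen]; omega
    · by_cases h2 : n - p ≤ k
      · refine ⟨A, List.sublist_append_left _ _, hAchain, ?_⟩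
        rw [hAlen]; omega
      · -- here k ≤ min p (n-p)
        refine ⟨A ++ B.drop k,
          List.Sublist.append (List.Sublist.refl _) (List.drop_sublist _ _), ?_, ?_⟩
        · unfold List.Chain'; rw [List.isChain_iff_pairwise, List.pairwise_append]
          refine ⟨List.isChain_iff_pairwise.mp hAchain,
            List.Pairwise.sublist (List.drop_sublist _ _) (List.isChain_iff_pairwise.mp hBchain), ?_⟩
          intro a ha c hc
          have hab := hAmem a ha
          rw [hB, drop_map_range, List.mem_map] at hc
          obtain ⟨i, hi, rfl⟩ := hc
          rw [List.mem_range] at hi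
          simp only [gt_iff_lt]
          omega
        · rw [List.length_append, hAlen, List.length_drop, hBlen]
          omega
  · -- upper bound
    rintro x ⟨s, hsub, hch, rfl⟩
    rw [List.sublist_append_iff] at hsub
    obtain ⟨s1, s2, rfl, h1, h2⟩ := hsub
    have hl1 : s1.length ≤ p := hAlen ▸ h1.length_le
    have hl2 : s2.length ≤ n - p := hBlen ▸ h2.length_le
    have hpw := List.isChain_iff_pairwise.mp hch
    rw [List.pairwise_append] at hpw
    obtain ⟨hpw1, hpw2, hcross⟩ := hpw
    rw [List.length_append]
    rcases s2 with _ | ⟨y, t2⟩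
    · simp only [List.length_nil]
      omega
    rcases hs1 : s1 with _ | ⟨a1, t1⟩
    · simp only [List.length_nil]
      omega
    rw [← hs1]
    -- both nonempty
    have hy : y ∈ B := h2.subset List.mem_cons_self
    have hyb := hBmem y hy
    have hb2 : ∀ x ∈ y :: t2, 1 ≤ x ∧ x ≤ y := by
      intro x hx
      rcases List.mem_cons.mp hx with rfl | hx
      · omega
      · have h1' := (List.pairwise_cons.mp hpw2).1 x hx
        have h2' := (hBmem x (h2.subset (List.mem_cons_of_mem _ hx))).1
        omega
    have hb1 : ∀ x ∈ s1, y + 1 ≤ x ∧ x ≤ z + n := by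
      intro x hx
      have h1' := hcross x hx y List.mem_cons_self
      have h2' := (hAmem x (h1.subset hx)).2
      omega
    have e1 := decr_le (y + 1) s1 (z + n) hpw1 hb1
    have e2 := decr_le 1 (y :: t2) y hpw2 hb2
    have hs1pos : 1 ≤ s1.length := by rw [hs1]; simp
    simp only [List.length_cons] at *
    omega
end

section
/- Let n ≥ 1 and k ∈ ℤ. Consider the integer list L = [2n−2k−1, 2n−2k−3, …, 1−2k] ++ [2k−1, 2k−3, …, 2k−2n+1] (each block has n entries decreasing by 2). Then the maximum length of a strictly decreasing subsequence of L equals 2n − min(max(2k, 0), n). -/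
/-- A strictly decreasing list with entries in a finset `S` has length at most `S.card`. -/
lemma len_le_card_aux (l : List ℤ) (S : Finset ℤ) (hp : l.Pairwise (· > ·))
    (h : ∀ x ∈ l, x ∈ S) : l.length ≤ S.card := by
  have hnd : l.Nodup := hp.imp (fun h => ne_of_gt h)
  calc l.length = l.toFinset.card := (List.toFinset_card_of_nodup hnd).symm
    _ ≤ S.card := Finset.card_le_card (fun x hx => h x (List.mem_toFinset.mp hx))

/-- For `n ≥ 1` and `k ∈ ℤ`, the list
`L = [2n−2k−1, 2n−2k−3, …, 1−2k] ++ [2k−1, 2k−3, …, 2k−2n+1]` (each block has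
`n` entries decreasing by 2) has maximum length of a strictly decreasing
subsequence equal to `2n − min(max(2k,0), n)`. -/
theorem statement6 (n : ℕ) (k : ℤ) (hn : 1 ≤ n) :
    IsGreatest (ldsSet
      ((List.range n).map (fun i => 2 * (n : ℤ) - 2 * k - 1 - 2 * (i : ℤ)) ++
       (List.range n).map (fun i => 2 * k - 1 - 2 * (i : ℤ))))
      (2 * n - min (Int.toNat (2 * k)) n) := by
  have hL : ((List.range n).map (fun i => 2 * (n : ℤ) - 2 * k - 1 - 2 * (i : ℤ)) ++
       (List.range n).map (fun i => 2 * k - 1 - 2 * (i : ℤ)))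
      = (List.range n).map (fun i : ℕ => 2 * (n : ℤ) - 2 * k - 1 - 2 * (i : ℤ)) ++
        (List.range n).map (fun i : ℕ => 2 * k - 1 - 2 * (i : ℤ)) := by
    simp [← List.map_eq_flatMap, List.map_map]
    rfl
  rw [hL]
  set f : ℕ → ℤ := fun i : ℕ => 2 * (n : ℤ) - 2 * k - 1 - 2 * (i : ℤ) with hf
  set g : ℕ → ℤ := fun i : ℕ => 2 * k - 1 - 2 * (i : ℤ) with hg
  have hfv : ∀ i : ℕ, f i = 2 * (n : ℤ) - 2 * k - 1 - 2 * (i : ℤ) := fun _ => rfl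
  have hgv : ∀ i : ℕ, g i = 2 * k - 1 - 2 * (i : ℤ) := fun _ => rfl
  set A : List ℤ := (List.range n).map f with hA
  set B : List ℤ := (List.range n).map g with hB
  set c : ℕ := min (Int.toNat (2 * k)) n with hc
  have hcn : c ≤ n := min_le_right _ _
  have hAlen : A.length = n := by simp [hA]
  have hBlen : B.length = n := by simp [hB]
  have pwA : A.Pairwise (· > ·) := by
    rw [hA, List.pairwise_map]
    exact (List.pairwise_lt_range (n := n)).imp (fun {a b} h => by rw [hfv, hfv]; omega)
  have pwB : B.Pairwise (· > ·) := by
    rw [hB, List.pairwise_map]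
    exact (List.pairwise_lt_range (n := n)).imp (fun {a b} h => by rw [hgv, hgv]; omega)
  constructor
  · -- membership: witness A ++ B.drop c
    refine ⟨A ++ B.drop c, ?_, ?_, ?_⟩
    · exact (List.append_sublist_append_left A).mpr (List.drop_sublist c B)
    · apply List.Pairwise.isChain
      rw [List.pairwise_append]
      refine ⟨pwA, pwB.sublist (List.drop_sublist c B), ?_⟩
      intro x hx y hy
      obtain ⟨i, hi, rfl⟩ := List.mem_map.mp hx
      rw [List.mem_range] at hi
      obtain ⟨l, hl, rfl⟩ := List.mem_iff_getElem.mp hy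
      rw [List.length_drop, hBlen] at hl
      have hcl : c + l < B.length := by omega
      have hgoal : (B.drop c)[l] = g (c + l) := by
        rw [List.getElem_drop]
        simp only [hB, List.getElem_map, List.getElem_range]
      rw [hgoal, hfv, hgv]
      omega
    · rw [List.length_append, List.length_drop, hAlen, hBlen]
      omega
  · -- upper bound
    rintro m ⟨s, hsub, hchain, rfl⟩
    have hpw : s.Pairwise (· > ·) := List.isChain_iff_pairwise.mp hchain
    obtain ⟨s1, s2, rfl, hs1, hs2⟩ := List.sublist_append_iff.mp hsub
    rw [List.pairwise_append] at hpw
    obtain ⟨pw1, pw2, hcross⟩ := hpw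
    have hlen1 : s1.length ≤ n := by
      have := hs1.length_le; rwa [hAlen] at this
    rw [List.length_append]
    match s2 with
    | [] => simp only [List.length_nil]; omega
    | y :: rest =>
      have hyB : y ∈ B := hs2.subset (List.mem_cons_self (a := y) (l := rest))
      obtain ⟨j, hj, hyj⟩ := List.mem_map.mp hyB
      rw [List.mem_range] at hj
      -- bound on s1
      have hb1 : s1.length ≤ (Finset.range n |>.filter (fun i => y < f i)).card := by
        refine (len_le_card_aux _ ((Finset.range n |>.filter (fun i => y < f i)).image f)
          pw1 ?_).trans Finset.card_image_le
        intro x hx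
        obtain ⟨i, hi, rfl⟩ := List.mem_map.mp (hs1.subset hx)
        rw [List.mem_range] at hi
        exact Finset.mem_image_of_mem f (Finset.mem_filter.mpr
          ⟨Finset.mem_range.mpr hi, hcross _ hx y (List.mem_cons_self (a := y) (l := rest))⟩)
      -- bound on s2
      have hb2 : (y :: rest).length ≤ (Finset.range n |>.filter (fun l => g l ≤ y)).card := by
        refine (len_le_card_aux _ ((Finset.range n |>.filter (fun l => g l ≤ y)).image g)
          pw2 ?_).trans Finset.card_image_le
        intro z hz
        obtain ⟨l, hl, rfl⟩ := List.mem_map.mp (hs2.subset hz)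
        rw [List.mem_range] at hl
        have hzy : g l ≤ y := by
          rcases List.mem_cons.mp hz with h | h
          · rw [h]
          · exact le_of_lt (List.rel_of_pairwise_cons pw2 h)
        exact Finset.mem_image_of_mem g (Finset.mem_filter.mpr ⟨Finset.mem_range.mpr hl, hzy⟩)
      -- count the filters
      have hcard1 : (Finset.range n |>.filter (fun i => y < f i)).card
          ≤ min n (Int.toNat ((n : ℤ) + j - 2 * k)) := by
        refine le_min ((Finset.card_filter_le _ _).trans_eq (Finset.card_range n)) ?_
        refine (Finset.card_le_card ?_).trans_eq (Finset.card_range _)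
        intro i hi
        rw [Finset.mem_filter, Finset.mem_range] at hi
        rw [Finset.mem_range]
        have h2 : y < f i := hi.2
        rw [← hyj, hfv, hgv] at h2
        omega
      have hcard2 : (Finset.range n |>.filter (fun l => g l ≤ y)).card ≤ n - j := by
        have hsubset : (Finset.range n |>.filter (fun l => g l ≤ y)) ⊆ Finset.Ico j n := by
          intro l hl
          rw [Finset.mem_filter, Finset.mem_range] at hl
          rw [Finset.mem_Ico]
          have h2 : g l ≤ y := hl.2
          rw [← hyj, hgv, hgv] at h2
          omega
        exact (Finset.card_le_card hsubset).trans_eq (Nat.card_Ico j n)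
      have h1 := hb1.trans hcard1
      have h2 := hb2.trans hcard2
      simp only [List.length_cons] at h2 ⊢
      omega
end

section
/- Let n ≥ 3 and z ∈ ℤ. Consider the integer list L = [z+n−1] ++ [n−2, n−3, …, 1, 0] ++ [0, −1, …, 2−n] ++ [1−n−z] (of length 2n). Then the maximum length of a weakly increasing subsequence of L equals 2 if z ≥ 2−n, and equals 4 if z ≤ 1−n. -/
/-- The set of lengths of weakly increasing subsequences (sublists) of `L`. -/
def lisSet (L : List ℤ) : Set ℕ :=
  {m | ∃ s : List ℤ, s.Sublist L ∧ s.Chain' (· ≤ ·) ∧ s.length = m}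

/-- A weakly increasing sublist of a strictly decreasing list has length ≤ 1. -/
lemma len_le_one_aux {l s : List ℤ} (hl : l.Pairwise (· > ·)) (hs : s.Sublist l)
    (hc : s.Pairwise (· ≤ ·)) : s.length ≤ 1 := by
  match s with
  | [] => simp
  | [x] => simp
  | x :: y :: t =>
    exfalso
    have h1 : x ≤ y := (List.pairwise_cons.mp hc).1 y (by simp)
    have h2 : ([x, y] : List ℤ).Sublist l :=
      (((List.nil_sublist t).cons₂ y).cons₂ x).trans hs
    have h3 := hl.sublist h2
    simp at h3
    omega

/-- For `n ≥ 3` and `z ∈ ℤ`, the list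
`L = [z+n−1] ++ [n−2, n−3, …, 1, 0] ++ [0, −1, …, 2−n] ++ [1−n−z]` (of length
`2n`) has maximum length of a weakly increasing subsequence equal to `2` if
`z ≥ 2−n`, and `4` if `z ≤ 1−n`. -/
theorem statement8 (n : ℕ) (z : ℤ) (hn : 3 ≤ n) :
    (2 - (n : ℤ) ≤ z → IsGreatest (lisSet
      ([z + (n : ℤ) - 1] ++
       (List.range (n - 1)).map (fun i => (n : ℤ) - 2 - (i : ℤ)) ++
       (List.range (n - 1)).map (fun i => -(i : ℤ)) ++
       [1 - (n : ℤ) - z])) 2) ∧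
    (z ≤ 1 - (n : ℤ) → IsGreatest (lisSet
      ([z + (n : ℤ) - 1] ++
       (List.range (n - 1)).map (fun i => (n : ℤ) - 2 - (i : ℤ)) ++
       (List.range (n - 1)).map (fun i => -(i : ℤ)) ++
       [1 - (n : ℤ) - z])) 4) := by
  set a : ℤ := z + (n : ℤ) - 1 with ha
  set b : ℤ := 1 - (n : ℤ) - z with hb
  set A : List ℤ := (List.range (n - 1)).map (fun i => (n : ℤ) - 2 - (i : ℤ)) with hA0
  set B : List ℤ := (List.range (n - 1)).map (fun i => -(i : ℤ)) with hB0
  have hcast : ((List.range (n - 1) : List ℕ) : List ℤ)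
      = (List.range (n - 1)).map (fun i : ℕ => (i : ℤ)) := List.map_eq_flatMap.symm
  have hA : A = (List.range (n - 1)).map (fun i : ℕ => (n : ℤ) - 2 - (i : ℤ)) := by
    rw [hA0, hcast, List.map_map]; rfl
  have hB : B = (List.range (n - 1)).map (fun i : ℕ => -(i : ℤ)) := by
    rw [hB0, hcast, List.map_map]; rfl
  -- bounds on elements
  have hAmem : ∀ x ∈ A, 0 ≤ x ∧ x ≤ (n : ℤ) - 2 := by
    intro x hx
    rw [hA, List.mem_map] at hx
    obtain ⟨i, hi, rfl⟩ := hx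
    rw [List.mem_range] at hi
    constructor <;> [skip; skip] <;> omega
  have hBmem : ∀ x ∈ B, 2 - (n : ℤ) ≤ x ∧ x ≤ 0 := by
    intro x hx
    rw [hB, List.mem_map] at hx
    obtain ⟨i, hi, rfl⟩ := hx
    rw [List.mem_range] at hi
    omega
  -- strictly decreasing
  have pA : A.Pairwise (· > ·) := by
    rw [hA]
    refine (List.pairwise_lt_range).map _ ?_
    intro i j hij
    beta_reduce
    omega
  have pB : B.Pairwise (· > ·) := by
    rw [hB]
    refine (List.pairwise_lt_range).map _ ?_
    intro i j hij
    beta_reduce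
    omega
  -- 0 ∈ A and 0 ∈ B
  have h0A : (0 : ℤ) ∈ A := by
    rw [hA, List.mem_map]
    exact ⟨n - 2, by rw [List.mem_range]; omega, by push_cast [Nat.cast_sub (by omega : 2 ≤ n)]; ring⟩
  have h0B : (0 : ℤ) ∈ B := by
    rw [hB, List.mem_map]
    exact ⟨0, by rw [List.mem_range]; omega, by simp⟩
  have h00 : ([0, 0] : List ℤ).Sublist (A ++ B) :=
    List.Sublist.append (List.singleton_sublist.mpr h0A) (List.singleton_sublist.mpr h0B)
  -- decomposition of any increasing sublist
  have hdec : ∀ s : List ℤ, s.Sublist ([a] ++ A ++ B ++ [b]) → s.Chain' (· ≤ ·) →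
      ∃ s1 s2 s3 s4 : List ℤ, s = s1 ++ s2 ++ s3 ++ s4 ∧
        s1.Sublist [a] ∧ s2.Sublist A ∧ s3.Sublist B ∧ s4.Sublist [b] ∧
        s2.length ≤ 1 ∧ s3.length ≤ 1 ∧ s.Pairwise (· ≤ ·) := by
    intro s hs hc
    have hp : s.Pairwise (· ≤ ·) := List.isChain_iff_pairwise.mp hc
    rw [List.sublist_append_iff] at hs
    obtain ⟨u, s4, rfl, hu, hs4⟩ := hs
    rw [List.sublist_append_iff] at hu
    obtain ⟨v, s3, rfl, hv, hs3⟩ := hu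
    rw [List.sublist_append_iff] at hv
    obtain ⟨s1, s2, rfl, hs1, hs2⟩ := hv
    refine ⟨s1, s2, s3, s4, by simp [List.append_assoc], hs1, hs2, hs3, hs4, ?_, ?_, hp⟩
    · exact len_le_one_aux pA hs2 ((hp.sublist (by simp [List.append_assoc])))
    · refine len_le_one_aux pB hs3 (hp.sublist ?_)
      have : s3.Sublist ((s1 ++ s2) ++ s3) := List.sublist_append_right _ _
      exact this.trans (List.sublist_append_left _ _)
  constructor
  · -- case z ≥ 2 - n : max is 2
    intro hz
    constructor
    · -- 2 ∈ lisSet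
      refine ⟨[0, 0], ?_, by simp [List.Chain'], rfl⟩
      have h1 : ([0, 0] : List ℤ).Sublist ((A ++ B) ++ [b]) :=
        h00.trans (List.sublist_append_left _ _)
      have h2 : ([0, 0] : List ℤ).Sublist ([a] ++ ((A ++ B) ++ [b])) :=
        h1.trans (List.sublist_append_right _ _)
      simpa [List.append_assoc] using h2
    · -- upper bound 2
      rintro m ⟨s, hs, hc, rfl⟩
      obtain ⟨s1, s2, s3, s4, rfl, hs1, hs2, hs3, hs4, hl2, hl3, hp⟩ := hdec s hs hc
      have hl1 : s1.length ≤ 1 := hs1.length_le.trans (by simp)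
      have hl4 : s4.length ≤ 1 := hs4.length_le.trans (by simp)
      have hp' : (s1 ++ (s2 ++ (s3 ++ s4))).Pairwise (· ≤ ·) := by
        simpa [List.append_assoc] using hp
      have h1rest := (List.pairwise_append.mp hp').2.2
      have hrest := (List.pairwise_append.mp (List.pairwise_append.mp hp').2.1)
      have h2rest := hrest.2.2
      -- s1 and s3 not both nonempty
      have c13 : s1.length = 0 ∨ s3.length = 0 := by
        by_contra h
        push_neg at h
        obtain ⟨x, hx⟩ := List.exists_mem_of_length_pos (by omega : 0 < s1.length)
        obtain ⟨y, hy⟩ := List.exists_mem_of_length_pos (by omega : 0 < s3.length)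
        have hxa : x = a := by simpa using hs1.subset hx
        have hyB := hBmem y (hs3.subset hy)
        have := h1rest x hx y (by simp [hy])
        omega
      have c14 : s1.length = 0 ∨ s4.length = 0 := by
        by_contra h
        push_neg at h
        obtain ⟨x, hx⟩ := List.exists_mem_of_length_pos (by omega : 0 < s1.length)
        obtain ⟨y, hy⟩ := List.exists_mem_of_length_pos (by omega : 0 < s4.length)
        have hxa : x = a := by simpa using hs1.subset hx
        have hyb : y = b := by simpa using hs4.subset hy
        have := h1rest x hx y (by simp [hy])
        omega
      have c24 : s2.length = 0 ∨ s4.length = 0 := by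
        by_contra h
        push_neg at h
        obtain ⟨x, hx⟩ := List.exists_mem_of_length_pos (by omega : 0 < s2.length)
        obtain ⟨y, hy⟩ := List.exists_mem_of_length_pos (by omega : 0 < s4.length)
        have hxA := hAmem x (hs2.subset hx)
        have hyb : y = b := by simpa using hs4.subset hy
        have := h2rest x hx y (by simp [hy])
        omega
      simp only [List.length_append]
      omega
  · -- case z ≤ 1 - n : max is 4
    intro hz
    constructor
    · -- 4 ∈ lisSet
      refine ⟨[a, 0, 0, b], ?_, ?_, rfl⟩
      · have h1 : ([a] ++ [0, 0] ++ [b] : List ℤ).Sublist ([a] ++ (A ++ B) ++ [b]) :=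
          ((List.Sublist.refl [a]).append h00).append (List.Sublist.refl [b])
        simpa [List.append_assoc] using h1
      · simp only [List.Chain', List.isChain_cons_cons, List.isChain_singleton, and_true]
        refine ⟨by omega, by omega, by omega⟩
    · -- upper bound 4
      rintro m ⟨s, hs, hc, rfl⟩
      obtain ⟨s1, s2, s3, s4, rfl, hs1, hs2, hs3, hs4, hl2, hl3, hp⟩ := hdec s hs hc
      have hl1 : s1.length ≤ 1 := hs1.length_le.trans (by simp)
      have hl4 : s4.length ≤ 1 := hs4.length_le.trans (by simp)
      simp only [List.length_append]
      omega
end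

section
/- Let n ≥ 3 and z ∈ ℤ. Consider the integer list L = [z+n−1] ++ [n−2, n−3, …, 1, 0] ++ [0, −1, …, 2−n] ++ [1−n−z] (of length 2n). Then the maximum length of a strictly decreasing subsequence of L equals 2n−1 if z ≥ 0, and equals 2n−3 if z ≤ −1. -/
/-- `D a m = [a, a-1, ..., a-m+1]`. -/
def D (a : ℤ) (m : ℕ) : List ℤ := (List.range m).map (fun (i : ℕ) => a - (i : ℤ))

lemma D_length (a : ℤ) (m : ℕ) : (D a m).length = m := by simp [D]

lemma D_concat (a : ℤ) (m : ℕ) : D a (m+1) = D a m ++ [a - m] := by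
  simp [D, List.range_succ]

lemma D_cons (a : ℤ) (m : ℕ) : D a (m+1) = a :: D (a-1) m := by
  rw [D, D, List.range_succ_eq_map, List.map_cons, List.map_map]
  congr 1
  · simp
  apply List.map_congr_left
  intro i _
  simp [Function.comp]
  ring

lemma D_chain' (a : ℤ) (m : ℕ) : (D a m).Chain' (· > ·) := by
  cases m with
  | zero => simp [D, List.Chain']
  | succ m =>
    rw [D, List.Chain', List.isChain_map]
    rw [show m + 1 = m.succ from rfl, List.isChain_range_succ]
    intro i _
    simp only [Nat.succ_eq_add_one]
    push_cast
    omega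

lemma D_head? (a : ℤ) (m : ℕ) : (D a (m+1)).head? = some a := by
  rw [D_cons]; rfl

lemma D_getLast? (a : ℤ) (m : ℕ) : (D a (m+1)).getLast? = some (a - m) := by
  rw [D_concat, List.getLast?_concat]

lemma D_mem {a x : ℤ} {m : ℕ} (h : x ∈ D a m) : a - m < x ∧ x ≤ a := by
  simp [D] at h
  obtain ⟨i, hi, rfl⟩ := h
  omega

lemma chain'_length_le {s : List ℤ} (hc : s.Chain' (· > ·)) (T : Finset ℤ)
    (hT : ∀ x ∈ s, x ∈ T) : s.length ≤ T.card := by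
  have hp : s.Pairwise (· > ·) := List.isChain_iff_pairwise.mp hc
  have hnd : s.Nodup := hp.imp (fun h => ne_of_gt h)
  calc s.length = s.toFinset.card := (List.toFinset_card_of_nodup hnd).symm
    _ ≤ T.card := Finset.card_le_card (fun x hx => hT x (List.mem_toFinset.mp hx))

lemma chain'_length_le_Icc {s : List ℤ} {lo hi : ℤ} (hc : s.Chain' (· > ·))
    (h : ∀ x ∈ s, lo ≤ x ∧ x ≤ hi) : s.length ≤ (hi + 1 - lo).toNat := by
  have := chain'_length_le hc (Finset.Icc lo hi)
    (fun x hx => Finset.mem_Icc.mpr (h x hx))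
  rwa [Int.card_Icc] at this

/-- The two middle blocks cannot both be taken entirely. -/
lemma key (k : ℕ) {s1 s2 : List ℤ} (h1 : s1.Sublist (D (k+1) (k+2)))
    (h2 : s2.Sublist (D 0 (k+2))) (hc : (s1 ++ s2).Chain' (· > ·)) :
    s1.length + s2.length ≤ 2*k + 3 := by
  by_contra hcon
  push_neg at hcon
  have l1 : s1.length ≤ k+2 := by have := h1.length_le; rwa [D_length] at this
  have l2 : s2.length ≤ k+2 := by have := h2.length_le; rwa [D_length] at this
  have e1 : s1 = D (k+1) (k+2) := h1.eq_of_length (by rw [D_length]; omega)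
  have e2 : s2 = D 0 (k+2) := h2.eq_of_length (by rw [D_length]; omega)
  subst e1 e2
  obtain ⟨-, -, hj⟩ := List.isChain_append.mp hc
  have h01 : ((k:ℤ)+1) - ((k+1 : ℕ) : ℤ) ∈ (D ((k:ℤ)+1) (k+2)).getLast? := by
    rw [show k+2 = (k+1)+1 from rfl, D_getLast?]; rfl
  have h02 : (0:ℤ) ∈ (D 0 (k+2)).head? := by
    rw [show k+2 = (k+1)+1 from rfl, D_head?]; rfl
  have := hj _ h01 _ h02
  simp at this

lemma decomp (k : ℕ) (h t : ℤ) {s : List ℤ}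
    (hs : s.Sublist ([h] ++ D (k+1) (k+2) ++ D 0 (k+2) ++ [t])) :
    ∃ s0 s1 s2 s3 : List ℤ, s = s0 ++ s1 ++ s2 ++ s3 ∧ (s0 = [] ∨ s0 = [h]) ∧
      s1.Sublist (D (k+1) (k+2)) ∧ s2.Sublist (D 0 (k+2)) ∧ (s3 = [] ∨ s3 = [t]) := by
  rw [List.sublist_append_iff] at hs
  obtain ⟨u, s3, rfl, hu, h3⟩ := hs
  rw [List.sublist_append_iff] at hu
  obtain ⟨v, s2, rfl, hv, h2⟩ := hu
  rw [List.sublist_append_iff] at hv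
  obtain ⟨s0, s1, rfl, h0, h1⟩ := hv
  exact ⟨s0, s1, s2, s3, rfl, List.sublist_singleton.mp h0, h1, h2,
    List.sublist_singleton.mp h3⟩

lemma mid_sublist (s0 s1 s2 s3 : List ℤ) :
    (s1 ++ s2).Sublist (s0 ++ s1 ++ s2 ++ s3) := by
  have h1 : (s1 ++ s2).Sublist (s1 ++ s2 ++ s3) := List.sublist_append_left _ _
  have h2 : (s1 ++ s2 ++ s3).Sublist (s0 ++ (s1 ++ s2 ++ s3)) :=
    List.sublist_append_right _ _
  simpa [List.append_assoc] using h1.trans h2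

lemma upper1 (k : ℕ) (h t : ℤ) {s : List ℤ}
    (hs : s.Sublist ([h] ++ D (k+1) (k+2) ++ D 0 (k+2) ++ [t]))
    (hc : s.Chain' (· > ·)) : s.length ≤ 2*k + 5 := by
  obtain ⟨s0, s1, s2, s3, rfl, h0, h1, h2, h3⟩ := decomp k h t hs
  have hc12 : (s1 ++ s2).Chain' (· > ·) := hc.sublist (mid_sublist s0 s1 s2 s3)
  have hkey := key k h1 h2 hc12
  have l0 : s0.length ≤ 1 := by rcases h0 with rfl | rfl <;> simp
  have l3 : s3.length ≤ 1 := by rcases h3 with rfl | rfl <;> simp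
  simp only [List.length_append] at *
  omega

lemma upper2 (k : ℕ) (z : ℤ) (hz : z ≤ -1) {s : List ℤ}
    (hs : s.Sublist ([z + (k:ℤ) + 2] ++ D (k+1) (k+2) ++ D 0 (k+2) ++ [-(k:ℤ) - 2 - z]))
    (hc : s.Chain' (· > ·)) : s.length ≤ 2*k + 3 := by
  obtain ⟨s0, s1, s2, s3, rfl, h0, h1, h2, h3⟩ := decomp k _ _ hs
  have hc12 : (s1 ++ s2).Chain' (· > ·) := hc.sublist (mid_sublist s0 s1 s2 s3)
  -- basic range bounds on middle elements
  have hrange : ∀ x ∈ s1 ++ s2, -((k:ℤ)+1) ≤ x ∧ x ≤ (k:ℤ)+1 := by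
    intro x hx
    rcases List.mem_append.mp hx with hx | hx
    · have := D_mem (h1.subset hx); push_cast at this ⊢; omega
    · have := D_mem (h2.subset hx); push_cast at this ⊢; omega
  -- pairwise facts
  have hp : (s0 ++ s1 ++ s2 ++ s3).Pairwise (· > ·) := List.isChain_iff_pairwise.mp hc
  obtain ⟨hp1, -, hcross3⟩ := List.pairwise_append.mp hp
  obtain ⟨hp2, -, hcross2⟩ := List.pairwise_append.mp hp1
  obtain ⟨-, -, hcross1⟩ := List.pairwise_append.mp hp2
  -- 4 cases
  rcases h0 with rfl | rfl <;> rcases h3 with rfl | rfl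
  · -- neither endpoint
    have hlen := chain'_length_le_Icc (lo := -((k:ℤ)+1)) (hi := (k:ℤ)+1) hc12 hrange
    simp only [List.length_append, List.length_nil] at *
    omega
  · -- last endpoint only
    have hgt : ∀ x ∈ s1 ++ s2, -(k:ℤ) - 2 - z < x := by
      intro x hx
      rcases List.mem_append.mp hx with hx | hx
      · exact hcross3 x (by simp [hx]) _ (by simp)
      · exact hcross3 x (by simp [hx]) _ (by simp)
    have hlen := chain'_length_le_Icc (lo := -(k:ℤ)-1-z) (hi := (k:ℤ)+1) hc12 (fun x hx =>
      ⟨by have := hgt x hx; omega, (hrange x hx).2⟩)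
    simp only [List.length_append, List.length_nil, List.length_singleton] at *
    omega
  · -- first endpoint only
    have hlt : ∀ x ∈ s1 ++ s2, x < z + (k:ℤ) + 2 := by
      intro x hx
      rcases List.mem_append.mp hx with hx | hx
      · exact hcross1 _ (by simp) x hx
      · exact hcross2 _ (by simp) x hx
    have hlen := chain'_length_le_Icc (lo := -((k:ℤ)+1)) (hi := z+(k:ℤ)+1) hc12 (fun x hx =>
      ⟨(hrange x hx).1, by have := hlt x hx; omega⟩)
    simp only [List.length_append, List.length_nil, List.length_singleton] at *
    omega
  · -- both endpoints
    have hlt : ∀ x ∈ s1 ++ s2, x < z + (k:ℤ) + 2 := by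
      intro x hx
      rcases List.mem_append.mp hx with hx | hx
      · exact hcross1 _ (by simp) x hx
      · exact hcross2 _ (by simp) x hx
    have hgt : ∀ x ∈ s1 ++ s2, -(k:ℤ) - 2 - z < x := by
      intro x hx
      rcases List.mem_append.mp hx with hx | hx
      · exact hcross3 x (by simp [hx]) _ (by simp)
      · exact hcross3 x (by simp [hx]) _ (by simp)
    have hlen := chain'_length_le_Icc (lo := -(k:ℤ)-1-z) (hi := z+(k:ℤ)+1) hc12 (fun x hx =>
      ⟨by have := hgt x hx; omega, by have := hlt x hx; omega⟩)
    simp only [List.length_append, List.length_singleton] at *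
    omega

lemma junction {l1 l2 : List ℤ} {a b : ℤ} (h1 : l1.getLast? = some a)
    (h2 : l2.head? = some b) (hab : a > b) :
    ∀ x ∈ l1.getLast?, ∀ y ∈ l2.head?, x > y := by
  intro x hx y hy
  rw [h1] at hx
  rw [h2] at hy
  simp at hx hy
  subst hx; subst hy
  exact hab

lemma hBsub (k : ℕ) : (D (-1) (k+1)).Sublist (D 0 (k+2)) := by
  rw [D_cons 0 (k+1), show (0:ℤ) - 1 = -1 from by norm_num]
  exact List.sublist_cons_self _ _

lemma wit1 (k : ℕ) (z : ℤ) (hz : 0 ≤ z) :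
    (2*(k+3)-1) ∈ ldsSet ([z + (k:ℤ) + 2] ++ D ((k:ℤ)+1) (k+2) ++ D 0 (k+2) ++ [-(k:ℤ)-2-z]) := by
  refine ⟨[z + (k:ℤ) + 2] ++ D ((k:ℤ)+1) (k+2) ++ D (-1) (k+1) ++ [-(k:ℤ)-2-z], ?_, ?_, ?_⟩
  · exact ((List.Sublist.refl _).append (hBsub k)).append (List.Sublist.refl _)
  · refine List.isChain_append.mpr ⟨List.isChain_append.mpr ⟨List.isChain_append.mpr
      ⟨by simp, D_chain' _ _, ?_⟩, D_chain' _ _, ?_⟩, by simp, ?_⟩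
    · refine junction (a := z + (k:ℤ) + 2) (b := (k:ℤ)+1) (by simp)
        (by rw [show (k+2) = (k+1)+1 from rfl, D_head?]) ?_
      omega
    · refine junction
        (by rw [List.getLast?_append, show (k+2) = (k+1)+1 from rfl, D_getLast?]; rfl)
        (D_head? (-1) k) ?_
      push_cast; omega
    · refine junction (a := -1 - (k:ℤ)) (b := -(k:ℤ) - 2 - z)
        (by rw [List.getLast?_append, D_getLast? (-1) k]; rfl) rfl ?_
      omega
  · simp [D_length]
    omega

lemma wit2 (k : ℕ) (z : ℤ) :
    (2*(k+3)-3) ∈ ldsSet ([z + (k:ℤ) + 2] ++ D ((k:ℤ)+1) (k+2) ++ D 0 (k+2) ++ [-(k:ℤ)-2-z]) := by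
  refine ⟨D ((k:ℤ)+1) (k+2) ++ D (-1) (k+1), ?_, ?_, ?_⟩
  · have h1 : (D ((k:ℤ)+1) (k+2) ++ D (-1) (k+1)).Sublist
        (D ((k:ℤ)+1) (k+2) ++ D 0 (k+2)) := (List.Sublist.refl _).append (hBsub k)
    have h2 : (D ((k:ℤ)+1) (k+2) ++ D 0 (k+2)).Sublist
        (([z + (k:ℤ) + 2] ++ D ((k:ℤ)+1) (k+2)) ++ D 0 (k+2)) :=
      (List.sublist_cons_self _ _).append (List.Sublist.refl _)
    exact (h1.trans h2).trans (List.sublist_append_left _ _)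
  · refine List.isChain_append.mpr ⟨D_chain' _ _, D_chain' _ _, ?_⟩
    refine junction (by rw [show (k+2) = (k+1)+1 from rfl, D_getLast?])
      (D_head? (-1) k) ?_
    push_cast; omega
  · simp [D_length]
    omega

/-- For `n ≥ 3` and `z ∈ ℤ`, the list
`L = [z+n−1] ++ [n−2, n−3, …, 1, 0] ++ [0, −1, …, 2−n] ++ [1−n−z]` (of length
`2n`) has maximum length of a strictly decreasing subsequence equal to `2n−1`
if `z ≥ 0`, and `2n−3` if `z ≤ −1`. -/
theorem statement10 (n : ℕ) (z : ℤ) (hn : 3 ≤ n) :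
    (0 ≤ z → IsGreatest (ldsSet
      ([z + (n : ℤ) - 1] ++
       (List.range (n - 1)).map (fun i => (n : ℤ) - 2 - (i : ℤ)) ++
       (List.range (n - 1)).map (fun i => -(i : ℤ)) ++
       [1 - (n : ℤ) - z])) (2 * n - 1)) ∧
    (z ≤ -1 → IsGreatest (ldsSet
      ([z + (n : ℤ) - 1] ++
       (List.range (n - 1)).map (fun i => (n : ℤ) - 2 - (i : ℤ)) ++
       (List.range (n - 1)).map (fun i => -(i : ℤ)) ++
       [1 - (n : ℤ) - z])) (2 * n - 3)) := by
  obtain ⟨k, rfl⟩ : ∃ k, n = k + 3 := ⟨n - 3, by omega⟩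
  have e1 : z + ((k+3 : ℕ) : ℤ) - 1 = z + (k:ℤ) + 2 := by push_cast; ring
  have e2 : (List.range (k+3-1)).map (fun i => ((k+3 : ℕ) : ℤ) - 2 - (i : ℤ))
      = D ((k:ℤ)+1) (k+2) := by
    rw [show k+3-1 = k+2 from rfl, D]
    simp only [bind_pure_comp, List.map_map, List.map_eq_map]
    apply List.map_congr_left
    intro i _
    simp only [Function.comp_apply]
    push_cast; ring
  have e3 : (List.range (k+3-1)).map (fun i => -(i : ℤ)) = D 0 (k+2) := by
    rw [show k+3-1 = k+2 from rfl, D]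
    simp only [bind_pure_comp, List.map_map, List.map_eq_map]
    apply List.map_congr_left
    intro i _
    simp only [Function.comp_apply]
    ring
  have e4 : 1 - ((k+3 : ℕ) : ℤ) - z = -(k:ℤ)-2-z := by push_cast; ring
  rw [e1, e2, e3, e4]
  constructor
  · intro hz
    refine ⟨wit1 k z hz, ?_⟩
    rintro m ⟨s, hsub, hc, rfl⟩
    have := upper1 k (z + (k:ℤ) + 2) (-(k:ℤ)-2-z) hsub hc
    omega
  · intro hz
    refine ⟨wit2 k z, ?_⟩
    rintro m ⟨s, hsub, hc, rfl⟩
    have := upper2 k z hz hsub hc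
    omega
end

section
/- Let n ≥ 1 and k ∈ ℤ. Define a_i = 2(n−i) − k for i = 1, …, n, and let L = [a₁, …, aₙ] ++ [−aₙ, −a_{n−1}, …, −a₁] (a list of length 2n). Then the maximum length of a strictly decreasing subsequence of L equals 2n − min(max(k+1, 0), n). -/
/-- The list `[−aₙ, −a_{n−1}, …, −a₁]` obtained from `a = [a₁, …, aₙ]`. -/
def negRev (a : List ℤ) : List ℤ := (a.map (fun x => -x)).reverse

/-- In a strictly increasing list of naturals, length + head ≤ last + 1. -/
lemma sorted_len_aux : ∀ (l : List ℕ) (h : l ≠ []), l.Pairwise (· < ·) →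
    l.length + l.head h ≤ l.getLast h + 1 := by
  intro l
  induction l with
  | nil => simp
  | cons x t ih =>
    intro _ hp
    cases t with
    | nil => simp; omega
    | cons y t' =>
      have hxy : x < y := (List.pairwise_cons.mp hp).1 y (by simp)
      have := ih (by simp) (List.pairwise_cons.mp hp).2
      rw [List.getLast_cons (by simp)]
      simp only [List.length_cons, List.head_cons] at *
      omega

/-- For `n ≥ 1`, `k ∈ ℤ`, with `a_i = 2(n−i)−k` (`i = 1,…,n`) and
`L = [a₁,…,aₙ] ++ [−aₙ,…,−a₁]`, the maximum length of a strictly decreasing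
subsequence of `L` is `2n − min(max(k+1,0), n)`. -/
theorem statement15 (n : ℕ) (k : ℤ) (hn : 1 ≤ n) :
    IsGreatest (ldsSet
      ((List.range n).map (fun i => 2 * ((n : ℤ) - 1 - (i : ℤ)) - k) ++
       negRev ((List.range n).map (fun i => 2 * ((n : ℤ) - 1 - (i : ℤ)) - k))))
      (2 * n - min (Int.toNat (k + 1)) n) := by
  have hcoe : ((List.range n).map (fun i => 2 * ((n : ℤ) - 1 - (i : ℤ)) - k) : List ℤ)
      = (List.range n).map (fun i : ℕ => 2 * ((n : ℤ) - 1 - (i : ℤ)) - k) := by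
    simp only [bind_pure_comp, List.map_eq_map, List.map_map]; rfl
  rw [hcoe]
  set f : ℕ → ℤ := fun i : ℕ => 2 * ((n : ℤ) - 1 - (i : ℤ)) - k with hf
  set g : ℕ → ℤ := fun j : ℕ => k - 2 * (j : ℤ) with hg
  set A : List ℤ := (List.range n).map f with hA
  have hB : negRev A = (List.range n).map g := by
    apply List.ext_getElem
    · simp [negRev, hA]
    · intro j h₁ h₂
      have hjn : j < n := by simpa [negRev, hA] using h₂
      simp only [negRev, hA, List.getElem_reverse, List.getElem_map, List.length_map,
        List.length_range, List.getElem_range]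
      simp only [hf, hg]
      have : ((n - 1 - j : ℕ) : ℤ) = (n : ℤ) - 1 - j := by omega
      rw [this]; ring
  -- pairwise facts
  have hApw : A.Pairwise (· > ·) := by
    rw [hA, List.pairwise_map]
    exact (List.pairwise_lt_range (n := n)).imp (fun {a b} hab => by simp only [hf]; omega)
  have hBpw : ((List.range n).map g).Pairwise (· > ·) := by
    rw [List.pairwise_map]
    exact (List.pairwise_lt_range (n := n)).imp (fun {a b} hab => by simp only [hg]; omega)
  set t : ℕ := min (Int.toNat (k + 1)) n with ht
  have htn : t ≤ n := min_le_right _ _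
  constructor
  · -- membership: A ++ (drop t of second list) is a witness
    refine ⟨A ++ (((List.range n).map g).drop t), ?_, ?_, ?_⟩
    · rw [hB]
      exact (List.append_sublist_append_left A).mpr (List.drop_sublist _ _)
    · rw [show @List.Chain' ℤ = List.IsChain from rfl, List.isChain_iff_pairwise, List.pairwise_append]
      refine ⟨hApw, hBpw.sublist (List.drop_sublist _ _), ?_⟩
      intro x hx y hy
      rw [hA, List.mem_map] at hx
      obtain ⟨i, hi, rfl⟩ := hx
      rw [List.mem_range] at hi
      rw [← List.map_drop, List.mem_map] at hy
      obtain ⟨j, hj, rfl⟩ := hy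
      have hjt : t ≤ j ∧ j < n := by
        obtain ⟨m, hm, rfl⟩ := List.mem_iff_getElem.mp hj
        simp only [List.getElem_drop, List.getElem_range] at *
        simp at hm
        omega
      -- need f i > g j, i.e. 2(n-1-i)-k > k-2j ; uses t ≥ k+1 (else t = n and no j)
      have htk : (t : ℤ) ≥ k + 1 ∨ t = n := by
        rcases min_cases (Int.toNat (k + 1)) n with ⟨h1, _⟩ | ⟨h1, _⟩ <;> [left; right] <;> omega
      simp only [hf, hg]
      have hik : (i : ℤ) ≤ (n : ℤ) - 1 := by exact_mod_cast by omega
      rcases htk with h | h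
      · have : (t : ℤ) ≤ (j : ℤ) := by exact_mod_cast hjt.1
        omega
      · exfalso; omega
    · have h1 : (((List.range n).map g).drop t).length = n - t := by simp
      simp only [List.length_append, h1, hA, List.length_map, List.length_range]
      omega
  · -- upper bound
    rintro m ⟨s, hsub, hch, rfl⟩
    rw [hB, List.sublist_append_iff] at hsub
    obtain ⟨s₁, s₂, rfl, hs₁, hs₂⟩ := hsub
    rw [hA, List.sublist_map_iff] at hs₁
    obtain ⟨I, hI, rfl⟩ := hs₁
    rw [List.sublist_map_iff] at hs₂
    obtain ⟨J, hJ, rfl⟩ := hs₂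
    have hIpw : I.Pairwise (· < ·) := (List.pairwise_lt_range (n := n)).sublist hI
    have hJpw : J.Pairwise (· < ·) := (List.pairwise_lt_range (n := n)).sublist hJ
    have hIn : I.length ≤ n := by simpa using hI.length_le
    have hJn : J.length ≤ n := by simpa using hJ.length_le
    simp only [List.length_append, List.length_map]
    rcases eq_or_ne I [] with rfl | hIne
    · simp only [List.length_nil]; omega
    rcases eq_or_ne J [] with rfl | hJne
    · simp only [List.length_nil]; omega
    -- both nonempty
    have hcross : f (I.getLast hIne) > g (J.head hJne) := by
      rw [show @List.Chain' ℤ = List.IsChain from rfl, List.isChain_iff_pairwise, List.pairwise_append] at hch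
      exact hch.2.2 _ (List.mem_map_of_mem (f := f) (List.getLast_mem hIne))
        _ (List.mem_map_of_mem (f := g) (List.head_mem hJne))
    have hIlen : I.length ≤ I.getLast hIne + 1 := by
      have := sorted_len_aux I hIne hIpw; omega
    have hJlen : J.length + J.head hJne ≤ n := by
      have h1 := sorted_len_aux J hJne hJpw
      have h2 : J.getLast hJne < n := by
        have := hJ.mem (List.getLast_mem hJne)
        simpa using this
      omega
    have hIlt : I.getLast hIne < n := by
      have := hI.mem (List.getLast_mem hIne); simpa using this
    simp only [hf, hg] at hcross
    have hc2 : 2 * ((n : ℤ) - 1 - (I.getLast hIne : ℤ)) - k > k - 2 * (J.head hJne : ℤ) := hcross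
    omega
end
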